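/- Let Q be an NQPR in dimension d ≥ 2. For each j let λ_j^↑ (respectively λ_j^↓) denote the vector of eigenvalues of Q_j arranged in nondecreasing (respectively nonincreasing) order. Then min_{j,k} ∑_{i=1}^{d} λ_j^↑(i)·λ_k^↓(i) ≤ −1, and equality holds if and only if there exists a SIC Π_1, …, Π_{d²} such that either Q_j = √(d+1)·Π_j + ((1 − √(d+1))/d)·I for all j, or Q_j = −√(d+1)·Π_j + ((1 + √(d+1))/d)·I for all j. -/

import Mathlib

/-!
Let `λ` be the spectrum of one `Q j`, so `∑ λ = tr Q j = 1` and `∑ λ² = tr (Q j)² = d`.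
Splitting `(∑ λ)²` into the `d` cyclic shifts `∑ᵢ λ↑ᵢ λ↑ᵢ₊ₛ`, the rearrangement inequality bounds
each shift `s ≠ 0` below by `λ↑ · λ↓`, so `1 ≥ d + (d - 1) λ↑ · λ↓`: the bound `-1` already holds
on the diagonal `j = k`. Equality there forces equality for the shift by one, which makes the
spectrum a spike: `c` with multiplicity `d - 1` and `c + s` once, with `d c = 1 - s` and
`s² = d + 1`. Two such spectra pair to `-1` when their signs of `s` agree and to
`(2 - d²) / d < -1` otherwise, so the sign is common, `(Q j - c)(Q j - c - s) = 0`, and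
`(Q j - c) / s` is a SIC. Conversely `Q j = s Π j + c` makes every spectrum such a spike.
-/

/-- The components of `v` rearranged in nondecreasing order. -/
noncomputable def sortedAsc {d : ℕ} (v : Fin d → ℝ) : Fin d → ℝ :=
  v ∘ Tuple.sort v

/-- The components of `v` rearranged in nonincreasing order. -/
noncomputable def sortedDesc {d : ℕ} (v : Fin d → ℝ) : Fin d → ℝ :=
  fun i => sortedAsc v i.rev

open Finset Matrix

namespace Matrix.IsHermitian

variable {𝕜 n : Type*} [RCLike 𝕜] [Fintype n] [DecidableEq n] {A : Matrix n n 𝕜}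

lemma trace_mul_self (hA : A.IsHermitian) :
    (A * A).trace = ∑ i, (hA.eigenvalues i : 𝕜) ^ 2 := by
  conv_lhs => rw [hA.spectral_theorem, ← map_mul, Unitary.conjStarAlgAut_apply, trace_mul_cycle,
    Unitary.coe_star_mul_self, one_mul, diagonal_mul_diagonal, trace_diagonal]
  simp [sq]

lemma sub_smul_one_mul_sub_smul_one_eq_zero_iff (hA : A.IsHermitian) (a b : ℝ) :
    (A - (a : 𝕜) • 1) * (A - (b : 𝕜) • 1) = 0 ↔
      ∀ i, (hA.eigenvalues i - a) * (hA.eigenvalues i - b) = 0 := by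
  set φ := Unitary.conjStarAlgAut 𝕜 _ hA.eigenvectorUnitary
  have hsub (r : ℝ) :
      A - (r : 𝕜) • 1 = φ (diagonal fun i ↦ ((hA.eigenvalues i - r : ℝ) : 𝕜)) := by
    have hdiag : (diagonal fun i ↦ ((hA.eigenvalues i - r : ℝ) : 𝕜)) =
        diagonal (RCLike.ofReal ∘ hA.eigenvalues) - (r : 𝕜) • 1 := by
      rw [smul_one_eq_diagonal, diagonal_sub]
      simp
    rw [hdiag, map_sub, map_smul, map_one, ← hA.spectral_theorem]
  rw [hsub, hsub, ← map_mul, map_eq_zero_iff φ φ.injective, diagonal_mul_diagonal,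
    diagonal_eq_zero]
  simp only [← RCLike.ofReal_mul, funext_iff, Pi.zero_apply, RCLike.ofReal_eq_zero]

lemma sum_eigenvalues_eq (hA : A.IsHermitian) {r : ℝ} (h : A.trace = r) :
    ∑ i, hA.eigenvalues i = r := by
  rw [hA.trace_eq_sum_eigenvalues] at h
  exact_mod_cast h

lemma sum_sq_eigenvalues_eq (hA : A.IsHermitian) {r : ℝ} (h : (A * A).trace = r) :
    ∑ i, hA.eigenvalues i ^ 2 = r := by
  rw [hA.trace_mul_self] at h
  exact_mod_cast h

end Matrix.IsHermitian

section Sorting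

variable {d : ℕ}

lemma sortedAsc_monotone (v : Fin d → ℝ) : Monotone (sortedAsc v) :=
  Tuple.monotone_sort v

lemma sortedDesc_antitone (v : Fin d → ℝ) : Antitone (sortedDesc v) :=
  (sortedAsc_monotone v).comp_antitone Fin.rev_anti

lemma sum_comp_sortedAsc (f : ℝ → ℝ) (v : Fin d → ℝ) :
    ∑ i, f (sortedAsc v i) = ∑ i, f (v i) :=
  Equiv.sum_comp (Tuple.sort v) (f ∘ v)

lemma isLeast_sum_sortedAsc_mul_sortedDesc (a b : Fin d → ℝ) :
    IsLeast (Set.range fun σ : Equiv.Perm (Fin d) ↦ ∑ i, a i * b (σ i))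
      (∑ i, sortedAsc a i * sortedDesc b i) := by
  refine ⟨⟨(Tuple.sort a).symm.trans (Fin.revPerm.trans (Tuple.sort b)), ?_⟩, ?_⟩
  · simpa [sortedAsc, sortedDesc] using (Equiv.sum_comp (Tuple.sort a)
      (fun i ↦ a i * b ((Tuple.sort a).symm.trans (Fin.revPerm.trans (Tuple.sort b)) i))).symm
  · rintro _ ⟨σ, rfl⟩
    have hanti := (sortedAsc_monotone a).antivary (sortedDesc_antitone b)
    refine (hanti.sum_mul_le_sum_mul_comp_perm (σ := (Tuple.sort a).trans
      (σ.trans ((Tuple.sort b).symm.trans Fin.revPerm)))).trans_eq ?_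
    simpa [sortedAsc, sortedDesc] using Equiv.sum_comp (Tuple.sort a) (fun i ↦ a i * b (σ i))

end Sorting

section CyclicShifts

variable {d : ℕ} [NeZero d]

lemma sq_sum_eq_sum_sq_add_sum_shift (u : Fin d → ℝ) :
    (∑ i, u i) ^ 2 = ∑ i, u i ^ 2 + ∑ s ∈ univ.erase 0, ∑ i, u i * u (i + s) := by
  have hshift (i : Fin d) : ∑ k, u i * u k = ∑ s, u i * u (i + s) :=
    (Equiv.sum_comp (Equiv.addLeft i) fun k ↦ u i * u k).symm
  rw [sq, sum_mul_sum, sum_congr rfl fun i _ ↦ hshift i, sum_comm,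
    ← add_sum_erase _ _ (mem_univ 0)]
  simp [sq]

lemma sum_mul_rev_le_sum_mul_add {u : Fin d → ℝ} (hu : Monotone u) (s : Fin d) :
    ∑ i, u i * u i.rev ≤ ∑ i, u i * u (i + s) := by
  have hanti : Antivary u (u ∘ Fin.rev) := hu.antivary (hu.comp_antitone Fin.rev_anti)
  simpa using hanti.sum_mul_le_sum_mul_comp_perm (σ := (Equiv.addRight s).trans Fin.revPerm)

lemma sub_one_mul_sum_mul_rev_eq (u : Fin d → ℝ) :
    ((d : ℝ) - 1) * ∑ i, u i * u i.rev = ∑ _s ∈ univ.erase (0 : Fin d), ∑ i, u i * u i.rev := by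
  rw [sum_const, card_erase_of_mem (mem_univ 0), card_univ, Fintype.card_fin, nsmul_eq_mul,
    Nat.cast_sub NeZero.one_le, Nat.cast_one]

lemma sum_sq_add_sub_one_mul_sum_mul_rev_le {u : Fin d → ℝ} (hu : Monotone u) :
    ∑ i, u i ^ 2 + ((d : ℝ) - 1) * ∑ i, u i * u i.rev ≤ (∑ i, u i) ^ 2 := by
  rw [sq_sum_eq_sum_sq_add_sum_shift, sub_one_mul_sum_mul_rev_eq]
  exact add_le_add_right (sum_le_sum fun s _ ↦ sum_mul_rev_le_sum_mul_add hu s) _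

lemma sum_mul_add_one_eq_sum_mul_rev {n : ℕ} {u : Fin (n + 2) → ℝ} (hu : Monotone u)
    (h : (∑ i, u i) ^ 2 = ∑ i, u i ^ 2 + (((n + 2 : ℕ) : ℝ) - 1) * ∑ i, u i * u i.rev) :
    ∑ i, u i * u (i + 1) = ∑ i, u i * u i.rev := by
  rw [sq_sum_eq_sum_sq_add_sum_shift, sub_one_mul_sum_mul_rev_eq, add_right_inj, ← sub_eq_zero,
    ← sum_sub_distrib, sum_eq_zero_iff_of_nonneg fun s _ ↦
      sub_nonneg.2 (sum_mul_rev_le_sum_mul_add hu s)] at h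
  exact sub_eq_zero.1 (h 1 (mem_erase.2 ⟨one_ne_zero, mem_univ _⟩))

end CyclicShifts

section Spike

variable {ι : Type*} [DecidableEq ι]

/-- The spectrum of `c • 1 + s • Π` for a rank-one projector `Π`. -/
def IsSpike (v : ι → ℝ) (c s : ℝ) : Prop :=
  ∃ p, ∀ i, v i = c + (Pi.single p s : ι → ℝ) i

lemma IsSpike.of_comp_equiv {v : ι → ℝ} {c s : ℝ} (e : Equiv.Perm ι)
    (h : IsSpike (v ∘ e) c s) : IsSpike v c s := by
  obtain ⟨p, hp⟩ := h
  refine ⟨e p, fun i ↦ ?_⟩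
  simpa [Pi.single_apply, Equiv.symm_apply_eq] using hp (e.symm i)

lemma IsSpike.eq_or_eq {v : ι → ℝ} {c s : ℝ} (h : IsSpike v c s) (i : ι) :
    v i = c ∨ v i = c + s := by
  obtain ⟨p, hp⟩ := h
  rcases eq_or_ne i p with rfl | hi <;> simp [*]

variable [Fintype ι]

lemma IsSpike.sum_eq {v : ι → ℝ} {c s : ℝ} (h : IsSpike v c s) :
    ∑ i, v i = Fintype.card ι * c + s := by
  obtain ⟨p, hp⟩ := h
  simp [hp, sum_add_distrib]

lemma IsSpike.sum_sq_eq {v : ι → ℝ} {c s : ℝ} (h : IsSpike v c s) :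
    ∑ i, v i ^ 2 = Fintype.card ι * c ^ 2 + 2 * c * s + s ^ 2 := by
  obtain ⟨p, hp⟩ := h
  simp [hp, add_sq, sum_add_distrib, Pi.single_apply, mul_assoc]

lemma isSpike_of_forall_eq_or_eq {v : ι → ℝ} {c s : ℝ} (hs : s ≠ 0)
    (hv : ∀ i, v i = c ∨ v i = c + s) (hsum : ∑ i, v i = Fintype.card ι * c + s) :
    IsSpike v c s := by
  set T := univ.filter fun i ↦ v i = c + s
  have hvT (i : ι) : v i = c + if i ∈ T then s else 0 := by
    rcases hv i with h | h <;> simp [T, h, hs]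
  have hcard : T.card = 1 := by
    simp_rw [hvT, sum_add_distrib, sum_ite_mem, univ_inter, sum_const, nsmul_eq_mul] at hsum
    simpa [hs] using hsum
  obtain ⟨p, hp⟩ := card_eq_one.1 hcard
  exact ⟨p, fun i ↦ by simp [hvT i, hp, Pi.single_apply]⟩

lemma sum_const_add_single_mul_comp_perm {a b : ι → ℝ} {c s c' s' : ℝ} {p q : ι}
    (ha : ∀ i, a i = c + (Pi.single p s : ι → ℝ) i)
    (hb : ∀ i, b i = c' + (Pi.single q s' : ι → ℝ) i) (σ : Equiv.Perm ι) :
    ∑ i, a i * b (σ i) =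
      Fintype.card ι * c * c' + c * s' + s * c' + s * (Pi.single q s' : ι → ℝ) (σ p) := by
  have hcross : ∑ i, (Pi.single p s : ι → ℝ) i * (Pi.single q s' : ι → ℝ) (σ i) =
      s * (Pi.single q s' : ι → ℝ) (σ p) := by
    rw [Fintype.sum_eq_single p fun i hi ↦ by simp [hi]]
    simp
  simp only [ha, hb, add_mul, mul_add, sum_add_distrib, ← mul_sum, ← sum_mul, hcross,
    Equiv.sum_comp σ (Pi.single q s'), Finset.sum_pi_single', mem_univ, if_true, sum_const,
    card_univ, nsmul_eq_mul]
  ring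

end Spike

lemma IsSpike.swap_of_fin_two {v : Fin 2 → ℝ} {c s : ℝ} (h : IsSpike v c s) :
    IsSpike v (c + s) (-s) := by
  obtain ⟨p, hp⟩ := h
  refine ⟨p.rev, fun i ↦ ?_⟩
  rw [hp i]
  fin_cases p <;> fin_cases i <;> simp

lemma Monotone.isSpike_of_sum_mul_add_one_eq {n : ℕ} {u : Fin (n + 2) → ℝ} (hu : Monotone u)
    (h : ∑ i, u i * u (i + 1) = ∑ i, u i * u i.rev) : ∃ c s, IsSpike u c s := by
  have hanti : Antivary u (u ∘ Fin.rev) := hu.antivary (hu.comp_antitone Fin.rev_anti)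
  have hshift : Antivary u fun i ↦ u (i + 1) := by
    simpa [Function.comp_def] using (hanti.sum_mul_eq_sum_mul_comp_perm_iff
      (σ := (Equiv.addRight 1).trans Fin.revPerm)).1 (by simpa using h)
  by_cases htop : u 1 = u (Fin.last _)
  · refine ⟨u 1, u 0 - u 1, 0, fun i ↦ ?_⟩
    rcases eq_or_ne i 0 with rfl | hi
    · simp
    · have hge : u 1 ≤ u i := hu (Fin.one_le_of_ne_zero hi)
      have hle : u i ≤ u 1 := htop ▸ hu (Fin.le_last i)
      simp [hi, le_antisymm hle hge]
  · have hlt : u 1 < u (Fin.last _) := (hu (Fin.le_last 1)).lt_of_ne htop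
    have hlow : u (Fin.last n).castSucc ≤ u 0 := hshift (by simpa [Fin.coeSucc_eq_succ] using hlt)
    refine ⟨u 0, u (Fin.last _) - u 0, Fin.last _, fun i ↦ ?_⟩
    rcases eq_or_ne i (Fin.last _) with rfl | hi
    · simp
    · have hle : i ≤ (Fin.last n).castSucc :=
        Fin.le_castSucc_iff.2 (Fin.lt_last_iff_ne_last.2 hi)
      simp [hi, le_antisymm ((hu hle).trans hlow) (hu (Fin.zero_le i))]

section SortedPairing

variable {d : ℕ}

lemma ne_zero_of_sq_eq_natCast_add_one {s : ℝ} (hs : s ^ 2 = d + 1) : s ≠ 0 := by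
  rintro rfl
  nlinarith [(Nat.cast_nonneg d : (0 : ℝ) ≤ d)]

lemma sum_sortedAsc_mul_sortedDesc_self_le (hd : 2 ≤ d) {v : Fin d → ℝ} (h1 : ∑ i, v i = 1)
    (h2 : ∑ i, v i ^ 2 = d) : ∑ i, sortedAsc v i * sortedDesc v i ≤ -1 := by
  have : NeZero d := ⟨by omega⟩
  have key := sum_sq_add_sub_one_mul_sum_mul_rev_le (sortedAsc_monotone v)
  rw [sum_comp_sortedAsc (· ^ 2), h2, (sum_comp_sortedAsc (fun x ↦ x) v).trans h1] at key
  have hd' : (2 : ℝ) ≤ d := by exact_mod_cast hd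
  change ∑ i, sortedAsc v i * sortedAsc v i.rev ≤ -1
  nlinarith

lemma exists_isSpike_of_sum_sortedAsc_mul_sortedDesc_self_eq (hd : 2 ≤ d) {v : Fin d → ℝ}
    (h1 : ∑ i, v i = 1) (h2 : ∑ i, v i ^ 2 = d)
    (h : ∑ i, sortedAsc v i * sortedDesc v i = -1) : ∃ c s, IsSpike v c s := by
  obtain ⟨n, rfl⟩ : ∃ n, d = n + 2 := ⟨d - 2, by omega⟩
  have hu := sortedAsc_monotone v
  obtain ⟨c, s, hspike⟩ := hu.isSpike_of_sum_mul_add_one_eq (sum_mul_add_one_eq_sum_mul_rev hu (by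
    change _ = _ + _ * ∑ i, sortedAsc v i * sortedDesc v i
    rw [sum_comp_sortedAsc (· ^ 2), h2, (sum_comp_sortedAsc (fun x ↦ x) v).trans h1, h]
    ring))
  exact ⟨c, s, hspike.of_comp_equiv (Tuple.sort v)⟩

lemma IsSpike.mul_eq_and_sq_eq (hd : 2 ≤ d) {v : Fin d → ℝ} {c s : ℝ}
    (h : IsSpike v c s) (h1 : ∑ i, v i = 1) (h2 : ∑ i, v i ^ 2 = d) :
    d * c = 1 - s ∧ s ^ 2 = d + 1 := by
  rw [h.sum_eq, Fintype.card_fin] at h1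
  rw [h.sum_sq_eq, Fintype.card_fin] at h2
  refine ⟨by linarith, mul_left_cancel₀ (a := (d : ℝ) - 1) ?_ ?_⟩
  · have : (2 : ℝ) ≤ d := by exact_mod_cast hd
    linarith
  · linear_combination d * h2 - (d * c + 1 + s) * h1

lemma IsSpike.sum_sortedAsc_mul_sortedDesc (hd : 2 ≤ d) {a b : Fin d → ℝ} {c s c' s' : ℝ}
    (ha : IsSpike a c s) (hb : IsSpike b c' s') :
    ∑ i, sortedAsc a i * sortedDesc b i = d * c * c' + c * s' + s * c' + min 0 (s * s') := by
  have : Nontrivial (Fin d) := Fin.nontrivial_iff_two_le.2 hd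
  obtain ⟨p, hp⟩ := ha
  obtain ⟨q, hq⟩ := hb
  have hσ := sum_const_add_single_mul_comp_perm hp hq
  simp only [Fintype.card_fin] at hσ
  obtain ⟨⟨σ₀, hσ₀⟩, hleast⟩ := isLeast_sum_sortedAsc_mul_sortedDesc a b
  obtain ⟨r, hr⟩ := exists_ne q
  have hle₁ := hleast ⟨Equiv.swap p r, rfl⟩
  have hle₂ := hleast ⟨Equiv.swap p q, rfl⟩
  simp only [hσ, Equiv.swap_apply_left, Pi.single_eq_same, Pi.single_eq_of_ne hr] at hle₁ hle₂ hσ₀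
  rw [← hσ₀] at hle₁ hle₂ ⊢
  by_cases hpq : σ₀ p = q
  · simp only [hpq, Pi.single_eq_same] at hle₁ ⊢
    rw [min_eq_right (by linarith)]
  · simp only [Pi.single_eq_of_ne hpq, mul_zero, add_zero] at hle₂ ⊢
    rw [min_eq_left (by linarith), add_zero]

lemma IsSpike.sum_sortedAsc_mul_sortedDesc_eq_neg_one (hd : 2 ≤ d) {a b : Fin d → ℝ} {c s : ℝ}
    (ha : IsSpike a c s) (hb : IsSpike b c s) (hc : d * c = 1 - s) (hs : s ^ 2 = d + 1) :
    ∑ i, sortedAsc a i * sortedDesc b i = -1 := by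
  rw [ha.sum_sortedAsc_mul_sortedDesc hd hb, min_eq_left (mul_self_nonneg s)]
  have hd0 : (d : ℝ) ≠ 0 := by positivity
  refine mul_left_cancel₀ hd0 ?_
  linear_combination (d * c + 1 + s) * hc - hs

lemma IsSpike.eq_two_of_neg_one_le_sum_sortedAsc_mul_sortedDesc (hd : 2 ≤ d) {a b : Fin d → ℝ}
    {c s c' : ℝ} (ha : IsSpike a c s) (hb : IsSpike b c' (-s)) (hc : d * c = 1 - s)
    (hc' : d * c' = 1 + s) (hs : s ^ 2 = d + 1)
    (h : -1 ≤ ∑ i, sortedAsc a i * sortedDesc b i) : d = 2 := by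
  rw [ha.sum_sortedAsc_mul_sortedDesc hd hb, min_eq_right (by nlinarith)] at h
  have hd' : (2 : ℝ) ≤ d := by exact_mod_cast hd
  have : (d : ℝ) ≤ 2 := by nlinarith
  exact_mod_cast le_antisymm this hd'

/-- Spikes of opposite signs pair to `(2 - d²) / d < -1`, unless `d = 2`, where both signs
describe the same vectors. -/
lemma isSpike_of_forall_neg_one_le {ι : Type*} (hd : 2 ≤ d) {v : ι → Fin d → ℝ} {c s : ι → ℝ}
    (hv : ∀ j, IsSpike (v j) (c j) (s j)) (hc : ∀ j, d * c j = 1 - s j)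
    (hs : ∀ j, s j ^ 2 = d + 1)
    (hge : ∀ j k, -1 ≤ ∑ i, sortedAsc (v j) i * sortedDesc (v k) i) (j₀ j : ι) :
    IsSpike (v j) (c j₀) (s j₀) := by
  have hd0 : (d : ℝ) ≠ 0 := by positivity
  rcases sq_eq_sq_iff_eq_or_eq_neg.1 ((hs j).trans (hs j₀).symm) with hsj | hsj
  · have hcj : c j = c j₀ := mul_left_cancel₀ hd0 (by rw [hc, hc, hsj])
    rw [← hcj, ← hsj]
    exact hv j
  · have hvj := hv j
    rw [hsj] at hvj
    obtain rfl := (hv j₀).eq_two_of_neg_one_le_sum_sortedAsc_mul_sortedDesc hd hvj (hc j₀)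
      (by rw [hc j, hsj, sub_neg_eq_add]) (hs j₀) (hge j₀ j)
    have hcj : c j + s j = c j₀ := by
      have := hc j
      have := hc j₀
      push_cast at *
      linarith
    have hswap := (hv j).swap_of_fin_two
    rwa [hcj, hsj, neg_neg] at hswap

end SortedPairing

section SIC

variable {ι : Type*} [DecidableEq ι] {d : ℕ}

structure IsSIC (P : ι → Matrix (Fin d) (Fin d) ℂ) : Prop where
  isHermitian : ∀ j, (P j).IsHermitian
  mul_self : ∀ j, P j * P j = P j
  trace_eq_one : ∀ j, (P j).trace = 1
  trace_mul : ∀ j k, (P j * P k).trace = ((d : ℂ) * (if j = k then 1 else 0) + 1) / ((d : ℂ) + 1)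

lemma isSIC_smul_sub_smul_one {Q : ι → Matrix (Fin d) (Fin d) ℂ}
    (hherm : ∀ j, (Q j).IsHermitian) (htr : ∀ j, (Q j).trace = 1)
    (hpair : ∀ j k, (Q j * Q k).trace = if j = k then (d : ℂ) else 0)
    (hd : d ≠ 0) {c s : ℝ} (hc : d * c = 1 - s) (hs : s ^ 2 = d + 1)
    (hQ : ∀ j, (Q j - (c : ℂ) • 1) * (Q j - ((c + s : ℝ) : ℂ) • 1) = 0) :
    IsSIC fun j ↦ (s : ℂ)⁻¹ • (Q j - (c : ℂ) • 1) := by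
  have hs0 : (s : ℂ) ≠ 0 := Complex.ofReal_ne_zero.2 (ne_zero_of_sq_eq_natCast_add_one hs)
  have hcC : (d : ℂ) * c = 1 - s := by exact_mod_cast hc
  have hsC : (s : ℂ) ^ 2 = d + 1 := by exact_mod_cast hs
  have hsq (j) : (Q j - (c : ℂ) • 1) * (Q j - (c : ℂ) • 1) = (s : ℂ) • (Q j - (c : ℂ) • 1) := by
    rw [← sub_eq_zero, ← hQ j]
    push_cast
    simp only [add_smul, ← sub_sub, mul_sub, Matrix.mul_smul, mul_one]
  have htr_mul (j k) : ((Q j - (c : ℂ) • 1) * (Q k - (c : ℂ) • 1)).trace =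
      (if j = k then (d : ℂ) else 0) + (c * (d * c) - 2 * c) := by
    simp only [sub_mul, mul_sub, Matrix.smul_mul, Matrix.mul_smul, one_mul, mul_one, smul_smul,
      trace_sub, trace_smul, hpair, htr, trace_one, Fintype.card_fin, smul_eq_mul]
    ring
  refine ⟨fun j ↦ ?_, fun j ↦ ?_, fun j ↦ ?_, fun j k ↦ ?_⟩
  · exact ((hherm j).sub (isHermitian_one.smul (by simp [IsSelfAdjoint]))).smul
      (by simp [IsSelfAdjoint])
  · rw [Matrix.smul_mul, Matrix.mul_smul, hsq, smul_smul, smul_smul]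
    congr 1
    field_simp
  · rw [trace_smul, trace_sub, htr, trace_smul, trace_one, Fintype.card_fin, smul_eq_mul,
      smul_eq_mul, mul_comm (c : ℂ), hcC, sub_sub_cancel, inv_mul_cancel₀ hs0]
  · have hkey : (c : ℂ) * (1 - s) - 2 * c = 1 := by
      refine mul_left_cancel₀ (Nat.cast_ne_zero.2 hd : (d : ℂ) ≠ 0) ?_
      linear_combination (1 - s - 2 : ℂ) * hcC + hsC
    have hinv : (s : ℂ)⁻¹ * (s : ℂ)⁻¹ = ((d : ℂ) + 1)⁻¹ := by rw [← mul_inv, ← sq, hsC]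
    rw [Matrix.smul_mul, Matrix.mul_smul, smul_smul, trace_smul, htr_mul, hcC, hkey, hinv,
      smul_eq_mul]
    split_ifs <;> ring

end SIC

section NQPR

variable {ι : Type*} {d : ℕ} {Q : ι → Matrix (Fin d) (Fin d) ℂ}

lemma Matrix.IsHermitian.isSpike_eigenvalues {A P : Matrix (Fin d) (Fin d) ℂ}
    (hA : A.IsHermitian) (htr : A.trace = 1) (hP : P * P = P) {c s : ℝ} (hs : s ≠ 0)
    (hc : d * c = 1 - s) (hAP : A = (s : ℂ) • P + (c : ℂ) • 1) :
    IsSpike hA.eigenvalues c s := by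
  have hsub₁ : A - (c : ℂ) • 1 = (s : ℂ) • P := by rw [hAP, add_sub_cancel_right]
  have hsub₂ : A - ((c + s : ℝ) : ℂ) • 1 = (s : ℂ) • (P - 1) := by
    rw [hAP, Complex.ofReal_add, add_smul, smul_sub]
    abel
  have heig := (hA.sub_smul_one_mul_sub_smul_one_eq_zero_iff c (c + s)).1 (by
    change (A - (c : ℂ) • 1) * (A - ((c + s : ℝ) : ℂ) • 1) = 0
    rw [hsub₁, hsub₂, Matrix.smul_mul, Matrix.mul_smul, mul_sub, hP, mul_one, sub_self,
      smul_zero, smul_zero])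
  refine isSpike_of_forall_eq_or_eq hs (fun i ↦ ?_) ?_
  · rcases mul_eq_zero.1 (heig i) with h | h
    exacts [Or.inl (sub_eq_zero.1 h), Or.inr (sub_eq_zero.1 h)]
  · rw [hA.sum_eigenvalues_eq (r := 1) (by exact_mod_cast htr), Fintype.card_fin, hc]
    ring

lemma exists_isSIC_of_forall_neg_one_le [Fintype ι] [DecidableEq ι] [Nonempty ι] (hd : 2 ≤ d)
    (hherm : ∀ j, (Q j).IsHermitian) (htr : ∀ j, (Q j).trace = 1)
    (hpair : ∀ j k, (Q j * Q k).trace = if j = k then (d : ℂ) else 0)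
    (hge : ∀ j k,
      -1 ≤ ∑ i, sortedAsc (hherm j).eigenvalues i * sortedDesc (hherm k).eigenvalues i) :
    ∃ (s : ℝ) (P : ι → Matrix (Fin d) (Fin d) ℂ), s ^ 2 = d + 1 ∧ IsSIC P ∧
      ∀ j, Q j = (s : ℂ) • P j + (((1 - s) / d : ℝ) : ℂ) • 1 := by
  have hsum (j) := (hherm j).sum_eigenvalues_eq (r := 1) (by exact_mod_cast htr j)
  have hsq (j) := (hherm j).sum_sq_eigenvalues_eq (r := d) (by simpa using hpair j j)
  choose c s hspike using fun j ↦ exists_isSpike_of_sum_sortedAsc_mul_sortedDesc_self_eq hd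
    (hsum j) (hsq j) (le_antisymm (sum_sortedAsc_mul_sortedDesc_self_le hd (hsum j) (hsq j))
      (hge j j))
  have hnorm (j) := (hspike j).mul_eq_and_sq_eq hd (hsum j) (hsq j)
  obtain ⟨j₀⟩ := ‹Nonempty ι›
  have hcommon := isSpike_of_forall_neg_one_le hd hspike (fun j ↦ (hnorm j).1)
    (fun j ↦ (hnorm j).2) hge j₀
  obtain ⟨hc, hs⟩ := hnorm j₀
  have hs0 : (s j₀ : ℂ) ≠ 0 := Complex.ofReal_ne_zero.2 (ne_zero_of_sq_eq_natCast_add_one hs)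
  have hc' : (1 - s j₀) / d = c j₀ := by
    rw [← hc, mul_div_cancel_left₀ _ (by positivity)]
  refine ⟨s j₀, _, hs, isSIC_smul_sub_smul_one hherm htr hpair (by omega) hc hs fun j ↦
    (hherm j).sub_smul_one_mul_sub_smul_one_eq_zero_iff (c j₀) (c j₀ + s j₀) |>.2 fun i ↦ ?_,
    fun j ↦ ?_⟩
  · rcases (hcommon j).eq_or_eq i with h | h <;> rw [h] <;> ring
  · rw [hc', smul_inv_smul₀ hs0, sub_add_cancel]

lemma sum_sortedAsc_mul_sortedDesc_eq_neg_one_of_eq_smul_add (hd : 2 ≤ d)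
    (hherm : ∀ j, (Q j).IsHermitian) (htr : ∀ j, (Q j).trace = 1)
    {P : ι → Matrix (Fin d) (Fin d) ℂ} (hP : ∀ j, P j * P j = P j) {s : ℝ} (hs : s ^ 2 = d + 1)
    (hQ : ∀ j, Q j = (s : ℂ) • P j + (((1 - s) / d : ℝ) : ℂ) • 1) (j k : ι) :
    ∑ i, sortedAsc (hherm j).eigenvalues i * sortedDesc (hherm k).eigenvalues i = -1 := by
  have hc : d * ((1 - s) / d) = 1 - s := mul_div_cancel₀ _ (by positivity)
  have hspike (j) := (hherm j).isSpike_eigenvalues (htr j) (hP j)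
    (ne_zero_of_sq_eq_natCast_add_one hs) hc (hQ j)
  exact (hspike j).sum_sortedAsc_mul_sortedDesc_eq_neg_one hd (hspike k) hc hs

end NQPR

theorem stmt_8_general (d : ℕ) (hd : 2 ≤ d)
    (Q : Fin (d ^ 2) → Matrix (Fin d) (Fin d) ℂ)
    (hherm : ∀ j, (Q j).IsHermitian)
    (htr : ∀ j, (Q j).trace = 1)
    (hpair : ∀ j k, (Q j * Q k).trace = if j = k then (d : ℂ) else 0) :
    (⨅ j, ⨅ k, ∑ i, sortedAsc ((hherm j).eigenvalues) i *
        sortedDesc ((hherm k).eigenvalues) i) ≤ -1 ∧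
    ((⨅ j, ⨅ k, ∑ i, sortedAsc ((hherm j).eigenvalues) i *
        sortedDesc ((hherm k).eigenvalues) i) = -1 ↔
      ∃ P : Fin (d ^ 2) → Matrix (Fin d) (Fin d) ℂ,
        (∀ j, (P j).IsHermitian) ∧
        (∀ j, P j * P j = P j) ∧
        (∀ j, (P j).trace = 1) ∧
        (∀ j k, (P j * P k).trace =
          ((d : ℂ) * (if j = k then 1 else 0) + 1) / ((d : ℂ) + 1)) ∧
        ((∀ j, Q j = (Real.sqrt (d + 1) : ℂ) • P j +
            (((1 - Real.sqrt (d + 1)) / d : ℝ) : ℂ) • (1 : Matrix (Fin d) (Fin d) ℂ)) ∨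
         (∀ j, Q j = -((Real.sqrt (d + 1) : ℂ)) • P j +
            (((1 + Real.sqrt (d + 1)) / d : ℝ) : ℂ) • (1 : Matrix (Fin d) (Fin d) ℂ)))) := by
  have hle (j k) : (⨅ j, ⨅ k, ∑ i, sortedAsc ((hherm j).eigenvalues) i *
      sortedDesc ((hherm k).eigenvalues) i) ≤
        ∑ i, sortedAsc ((hherm j).eigenvalues) i * sortedDesc ((hherm k).eigenvalues) i :=
    (ciInf_le (Set.finite_range _).bddBelow j).trans (ciInf_le (Set.finite_range _).bddBelow k)
  obtain ⟨j₀⟩ : Nonempty (Fin (d ^ 2)) := ⟨⟨0, by positivity⟩⟩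
  have : Nonempty (Fin (d ^ 2)) := ⟨j₀⟩
  have ht : √(d + 1 : ℝ) ^ 2 = d + 1 := Real.sq_sqrt (by positivity)
  refine ⟨(hle j₀ j₀).trans (sum_sortedAsc_mul_sortedDesc_self_le hd
    ((hherm j₀).sum_eigenvalues_eq (r := 1) (by exact_mod_cast htr j₀))
    ((hherm j₀).sum_sq_eigenvalues_eq (r := d) (by simpa using hpair j₀ j₀))), fun h ↦ ?_, ?_⟩
  · obtain ⟨s, P, hs, hP, hQ⟩ :=
      exists_isSIC_of_forall_neg_one_le hd hherm htr hpair fun j k ↦ h ▸ hle j k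
    refine ⟨P, hP.isHermitian, hP.mul_self, hP.trace_eq_one, hP.trace_mul, ?_⟩
    rcases sq_eq_sq_iff_eq_or_eq_neg.1 (hs.trans ht.symm) with rfl | rfl
    · exact Or.inl hQ
    · exact Or.inr (by simpa only [Complex.ofReal_neg, sub_neg_eq_add] using hQ)
  · rintro ⟨P, -, hP, -, -, hQ⟩
    obtain ⟨s, hs, hQ⟩ : ∃ s : ℝ, s ^ 2 = d + 1 ∧
        ∀ j, Q j = (s : ℂ) • P j + (((1 - s) / d : ℝ) : ℂ) • 1 :=
      hQ.elim (fun hQ ↦ ⟨_, ht, hQ⟩) fun hQ ↦ ⟨_, (neg_sq _).trans ht,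
        by simpa only [Complex.ofReal_neg, sub_neg_eq_add] using hQ⟩
    simp only [sum_sortedAsc_mul_sortedDesc_eq_neg_one_of_eq_smul_add hd hherm htr hP hs hQ,
      ciInf_const]

/-- For an NQPR `Q` in dimension `d ≥ 2`, with `λ_j^↑` (resp. `λ_j^↓`) the
eigenvalues of `Q j` in nondecreasing (resp. nonincreasing) order, one has
`min_{j,k} λ_j^↑ · λ_k^↓ ≤ −1`, with equality iff `Q` arises from a SIC `Π` as
`Q j = ±√(d+1)·Π j + ((1 ∓ √(d+1))/d)·I` (the same sign for all `j`). -/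
theorem stmt_8 (d : ℕ) (hd : 2 ≤ d)
    (Q : Fin (d ^ 2) → Matrix (Fin d) (Fin d) ℂ)
    (hherm : ∀ j, (Q j).IsHermitian)
    (htr : ∀ j, (Q j).trace = 1)
    (hpair : ∀ j k, (Q j * Q k).trace = if j = k then (d : ℂ) else 0)
    (hsum : ∑ j, Q j = (d : ℂ) • (1 : Matrix (Fin d) (Fin d) ℂ)) :
    (⨅ j, ⨅ k, ∑ i, sortedAsc ((hherm j).eigenvalues) i *
        sortedDesc ((hherm k).eigenvalues) i) ≤ -1 ∧
    ((⨅ j, ⨅ k, ∑ i, sortedAsc ((hherm j).eigenvalues) i *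
        sortedDesc ((hherm k).eigenvalues) i) = -1 ↔
      ∃ P : Fin (d ^ 2) → Matrix (Fin d) (Fin d) ℂ,
        (∀ j, (P j).IsHermitian) ∧
        (∀ j, P j * P j = P j) ∧
        (∀ j, (P j).trace = 1) ∧
        (∀ j k, (P j * P k).trace =
          ((d : ℂ) * (if j = k then 1 else 0) + 1) / ((d : ℂ) + 1)) ∧
        ((∀ j, Q j = (Real.sqrt (d + 1) : ℂ) • P j +
            (((1 - Real.sqrt (d + 1)) / d : ℝ) : ℂ) • (1 : Matrix (Fin d) (Fin d) ℂ)) ∨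
         (∀ j, Q j = -((Real.sqrt (d + 1) : ℂ)) • P j +
            (((1 + Real.sqrt (d + 1)) / d : ℝ) : ℂ) • (1 : Matrix (Fin d) (Fin d) ℂ)))) :=
  stmt_8_general d hd Q hherm htr hpair
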